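/- arXiv:2512.15511 — 2 statements merged into one kernel-verified Lean document; each statement's English description precedes it below -/
import Mathlib

section
/- If s and t are non-negative integers with s ≥ t and s^2 + t^2 is a power of 2 greater than 1, then either t = 0 and s is a power of 2, or s = t and s is a power of 2. -/
/-!
An odd square is `1 mod 4`, so when `4 ∣ s ^ 2 + t ^ 2` both `s` and `t` are even and halving
them divides `s ^ 2 + t ^ 2 = 2 ^ n` by four. This descent ends at `n = 0` or `n = 1`, where
`(s, t) = (1, 0)` or `(1, 1)`.
-/

theorem even_and_even_of_four_dvd_sq_add_sq {s t : ℕ} (h : 4 ∣ s ^ 2 + t ^ 2) :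
    Even s ∧ Even t := by
  rcases Nat.even_or_odd' s with ⟨a, rfl | rfl⟩ <;> rcases Nat.even_or_odd' t with ⟨b, rfl | rfl⟩
  · exact ⟨even_two_mul a, even_two_mul b⟩
  all_goals exfalso; ring_nf at h; omega

theorem sq_add_sq_eq_two_pow {s t n : ℕ} (hts : t ≤ s) (h : s ^ 2 + t ^ 2 = 2 ^ n) :
    (t = 0 ∧ ∃ e, s = 2 ^ e) ∨ (s = t ∧ ∃ e, s = 2 ^ e) := by
  induction n using Nat.strong_induction_on generalizing s t with
  | _ n ih =>
  match n with
  | 0 | 1 =>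
    obtain rfl : s = 1 := by nlinarith
    rcases Nat.le_one_iff_eq_zero_or_eq_one.mp hts with rfl | rfl
    · exact Or.inl ⟨rfl, 0, rfl⟩
    · exact Or.inr ⟨rfl, 0, rfl⟩
  | n + 2 =>
    obtain ⟨⟨a, rfl⟩, ⟨b, rfl⟩⟩ := even_and_even_of_four_dvd_sq_add_sq (s := s) (t := t)
      ⟨2 ^ n, by rw [h]; ring⟩
    have hab : a ^ 2 + b ^ 2 = 2 ^ n := by
      rw [pow_add] at h; nlinarith
    rcases ih n (by omega) (by omega) hab with ⟨rfl, e, rfl⟩ | ⟨rfl, e, rfl⟩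
    · exact Or.inl ⟨rfl, e + 1, by ring⟩
    · exact Or.inr ⟨rfl, e + 1, by ring⟩

theorem stmt_1_general (s t : ℕ) (hst : t ≤ s) (n : ℕ)
    (h : s ^ 2 + t ^ 2 = 2 ^ n) :
    (t = 0 ∧ ∃ e, s = 2 ^ e) ∨ (s = t ∧ ∃ e, s = 2 ^ e) :=
  sq_add_sq_eq_two_pow hst h

/-- If `s ≥ t` are naturals and `s² + t²` is a power of 2 greater than 1, then either
`t = 0` and `s` is a power of 2, or `s = t` and `s` is a power of 2. -/
theorem stmt_1 (s t : ℕ) (hst : t ≤ s) (n : ℕ) (hn : 1 ≤ n)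
    (h : s ^ 2 + t ^ 2 = 2 ^ n) :
    (t = 0 ∧ ∃ e, s = 2 ^ e) ∨ (s = t ∧ ∃ e, s = 2 ^ e) :=
  stmt_1_general s t hst n h
end

section
/- The toroidal regular polyhedra of type {4,4} with automorphism group a 2-group have group orders exactly the powers 2^n with n ≥ 5, and for each n ≥ 5 there is exactly one such polyhedron: the order of the automorphism group of {4,4}_{(s,t)} is 8(s²+t²), and 8(s²+t²) is a power of 2 with (s ≥ 2, t = 0 or s = t ≥ 2) if and only if (s,t) = (2^e, 0) (order 2^{2e+3}) or (s,t) = (2^e, 2^e) (order 2^{2e+4}) for some e ≥ 1. -/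
/-!
Since `8(s² + t²)` is a multiple of `s`, it can only be a power of `2` if `s = 2^e` is one;
then `8(s² + 0²) = 2^(2e+3)` and `8(s² + s²) = 2^(2e+4)`. The two families thus realise
the odd and the even exponents `n ≥ 5` respectively, each exactly once.
-/

/-- The parameters `(s, t)` of a toroidal map `{4,4}_(s,t)` that is regular. -/
def IsRegularTorusParam (s t : ℕ) : Prop :=
  (2 ≤ s ∧ t = 0) ∨ (s = t ∧ 2 ≤ s)

lemma eight_mul_two_pow_sq_add_zero (e : ℕ) :
    8 * ((2 ^ e) ^ 2 + 0 ^ 2) = 2 ^ (2 * e + 3) := by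
  rw [pow_add, pow_mul']; ring

lemma eight_mul_two_pow_sq_add_self (e : ℕ) :
    8 * ((2 ^ e) ^ 2 + (2 ^ e) ^ 2) = 2 ^ (2 * e + 4) := by
  rw [pow_add, pow_mul']; ring

lemma exists_eq_two_pow_of_dvd_two_pow {s k : ℕ} (h : s ∣ 2 ^ k) : ∃ e, s = 2 ^ e := by
  obtain ⟨e, -, rfl⟩ := (Nat.dvd_prime_pow Nat.prime_two).mp h
  exact ⟨e, rfl⟩

lemma exists_of_eight_mul_sq_add_zero_eq_two_pow {s n : ℕ} (h : 8 * (s ^ 2 + 0 ^ 2) = 2 ^ n) :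
    ∃ e, s = 2 ^ e ∧ n = 2 * e + 3 := by
  obtain ⟨e, rfl⟩ := exists_eq_two_pow_of_dvd_two_pow ⟨8 * s, by rw [← h]; ring⟩
  rw [eight_mul_two_pow_sq_add_zero] at h
  exact ⟨e, rfl, (Nat.pow_right_injective le_rfl h).symm⟩

lemma exists_of_eight_mul_sq_add_self_eq_two_pow {s n : ℕ} (h : 8 * (s ^ 2 + s ^ 2) = 2 ^ n) :
    ∃ e, s = 2 ^ e ∧ n = 2 * e + 4 := by
  obtain ⟨e, rfl⟩ := exists_eq_two_pow_of_dvd_two_pow ⟨16 * s, by rw [← h]; ring⟩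
  rw [eight_mul_two_pow_sq_add_self] at h
  exact ⟨e, rfl, (Nat.pow_right_injective le_rfl h).symm⟩

lemma one_le_of_two_le_two_pow {e : ℕ} (h : 2 ≤ 2 ^ e) : 1 ≤ e :=
  Nat.one_le_iff_ne_zero.mpr (by rintro rfl; simp at h)

theorem eight_mul_sq_add_sq_eq_two_pow_iff {s t n : ℕ} (hst : IsRegularTorusParam s t) :
    8 * (s ^ 2 + t ^ 2) = 2 ^ n ↔
      (∃ e, 1 ≤ e ∧ s = 2 ^ e ∧ t = 0 ∧ n = 2 * e + 3) ∨
      (∃ e, 1 ≤ e ∧ s = 2 ^ e ∧ t = 2 ^ e ∧ n = 2 * e + 4) := by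
  constructor
  · intro h
    rcases hst with ⟨hs, rfl⟩ | ⟨rfl, hs⟩
    · obtain ⟨e, rfl, rfl⟩ := exists_of_eight_mul_sq_add_zero_eq_two_pow h
      exact Or.inl ⟨e, one_le_of_two_le_two_pow hs, rfl, rfl, rfl⟩
    · obtain ⟨e, rfl, rfl⟩ := exists_of_eight_mul_sq_add_self_eq_two_pow h
      exact Or.inr ⟨e, one_le_of_two_le_two_pow hs, rfl, rfl, rfl⟩
  · rintro (⟨e, -, rfl, rfl, rfl⟩ | ⟨e, -, rfl, rfl, rfl⟩)
    exacts [eight_mul_two_pow_sq_add_zero e, eight_mul_two_pow_sq_add_self e]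

lemma exists_eq_two_mul_add_three_or_four {n : ℕ} (hn : 5 ≤ n) :
    ∃ e, 1 ≤ e ∧ (n = 2 * e + 3 ∨ n = 2 * e + 4) := by
  obtain ⟨k, hk | hk⟩ := Nat.even_or_odd' n
  · exact ⟨k - 2, by omega, by omega⟩
  · exact ⟨k - 1, by omega, by omega⟩

lemma two_le_two_pow {e : ℕ} (he : 1 ≤ e) : 2 ≤ 2 ^ e :=
  le_trans (by norm_num) (Nat.pow_le_pow_right (by norm_num) he)

theorem existsUnique_eight_mul_sq_add_sq_eq_two_pow {n : ℕ} (hn : 5 ≤ n) :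
    ∃! p : ℕ × ℕ, IsRegularTorusParam p.1 p.2 ∧ 8 * (p.1 ^ 2 + p.2 ^ 2) = 2 ^ n := by
  obtain ⟨e, he, rfl | rfl⟩ := exists_eq_two_mul_add_three_or_four hn
  · refine ⟨(2 ^ e, 0), ⟨Or.inl ⟨two_le_two_pow he, rfl⟩, eight_mul_two_pow_sq_add_zero e⟩, ?_⟩
    rintro ⟨s, t⟩ ⟨hst, h⟩
    rcases (eight_mul_sq_add_sq_eq_two_pow_iff hst).mp h with
      ⟨e', -, rfl, rfl, hn'⟩ | ⟨e', -, -, -, hn'⟩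
    · obtain rfl : e' = e := by omega
      rfl
    · omega
  · refine ⟨(2 ^ e, 2 ^ e), ⟨Or.inr ⟨rfl, two_le_two_pow he⟩, eight_mul_two_pow_sq_add_self e⟩, ?_⟩
    rintro ⟨s, t⟩ ⟨hst, h⟩
    rcases (eight_mul_sq_add_sq_eq_two_pow_iff hst).mp h with
      ⟨e', -, -, -, hn'⟩ | ⟨e', -, rfl, rfl, hn'⟩
    · omega
    · obtain rfl : e' = e := by omega
      rfl

/-- For admissible parameters (`s ≥ 2, t = 0` or `s = t ≥ 2`), `8(s²+t²)` is a power
`2^n` iff `(s,t) = (2^e,0)` with `n = 2e+3`, or `(s,t) = (2^e,2^e)` with `n = 2e+4`,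
for some `e ≥ 1`; and for each `n ≥ 5` exactly one admissible pair works. -/
theorem stmt_17 :
    (∀ s t n : ℕ, ((2 ≤ s ∧ t = 0) ∨ (s = t ∧ 2 ≤ s)) →
      (8 * (s ^ 2 + t ^ 2) = 2 ^ n ↔
        (∃ e, 1 ≤ e ∧ s = 2 ^ e ∧ t = 0 ∧ n = 2 * e + 3) ∨
        (∃ e, 1 ≤ e ∧ s = 2 ^ e ∧ t = 2 ^ e ∧ n = 2 * e + 4))) ∧
    (∀ n, 5 ≤ n → ∃! p : ℕ × ℕ,
      ((2 ≤ p.1 ∧ p.2 = 0) ∨ (p.1 = p.2 ∧ 2 ≤ p.1)) ∧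
      8 * (p.1 ^ 2 + p.2 ^ 2) = 2 ^ n) :=
  ⟨fun _ _ _ hst => eight_mul_sq_add_sq_eq_two_pow_iff hst,
    fun _ hn => existsUnique_eight_mul_sq_add_sq_eq_two_pow hn⟩
end
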